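/- arXiv:2211.08869 — 2 statements merged into one kernel-verified Lean document; each statement's English description precedes it below -/
import Mathlib

section
/- Let G be a group containing a normal subgroup N such that G/N is not cyclic and N is not contained in Z(G), and set C := C_G(N). Suppose that G/C is not cyclic. Then the non-commuting, non-generating graph nc(G) is connected with diameter 2 or 3. Moreover, if d(x,y) = 3 for vertices x, y of nc(G), then one of x, y lies in C, the other lies in G \ (N ∪ C), and [x,y] = 1. In particular, if C = Z(G), then nc(G) has diameter 2. -/
/-!
Every edge used comes from one observation: if `h` lies in a normal subgroup `H` with `G/H`
non-cyclic, then `⟨a, h⟩ ≤ ⟨a⟩H ≠ G`, so `a` and `h` are adjacent as soon as they do not commute.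
This applies to `H = N` and to `H = C`. As a group is not the union of the two proper subgroups
`C_H(x)` and `C_H(y)`, two vertices that are not centralised by `H` have a common neighbour in `H`
(`H = N` when `x, y ∉ C`, `H = G` when `x ∈ C` and `y ∈ C ∪ N`). The only pairs left are commuting
`x ∈ C`, `y ∉ C ∪ N`: any `n ∈ N` not commuting with `y` is adjacent to `y` and at distance at
most `2` from `x`.
-/
open Subgroup

namespace NC

variable {G : Type*} [Group G]

/-- The centre of a subgroup `H`, realised as a subgroup of the ambient group `G`. -/
def centerOf (H : Subgroup G) : Subgroup G := H ⊓ Subgroup.centralizer (H : Set G)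

/-- `H` is a maximal subgroup of `K` (both subgroups of the ambient group `G`). -/
def IsMaximalIn (H K : Subgroup G) : Prop :=
  H < K ∧ ∀ T : Subgroup G, H < T → T ≤ K → T = K

/-- The non-commuting, non-generating graph of `G`: vertices `x, y` are adjacent
iff they do not commute and do not generate `G`.  (Central elements are isolated
vertices here; the paper simply removes them from the vertex set.) -/
def ncGraph (G : Type*) [Group G] : SimpleGraph G where
  Adj x y := x * y ≠ y * x ∧ Subgroup.closure {x, y} ≠ ⊤
  symm := by
    constructor
    intro x y h
    exact ⟨fun e => h.1 e.symm, by rw [Set.pair_comm]; exact h.2⟩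
  loopless := by
    constructor
    intro x h
    exact h.1 rfl

/-- The conjugate `g H g⁻¹` of a subgroup `H` by an element `g`. -/
def conjSub (g : G) (H : Subgroup G) : Subgroup G := H.map (MulAut.conj g).toMonoidHom

/-- "The quotient of `G` by the subgroup `H` is cyclic": every coset of `H` is a
power of a fixed coset.  For `H` normal this says exactly that `G/H` is cyclic. -/
def QuotCyclic (H : Subgroup G) : Prop := ∃ g : G, ∀ x : G, ∃ n : ℤ, x⁻¹ * g ^ n ∈ H

/-- `P` is a Sylow `p`-subgroup of `G`. -/
def IsSylowIn (p : ℕ) (P : Subgroup G) : Prop :=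
  IsPGroup p P ∧ ∀ R : Subgroup G, IsPGroup p R → P ≤ R → R = P

/-- The Frattini subgroup of a subgroup `P` (the intersection of the maximal
subgroups of `P`), realised as a subgroup of the ambient group. -/
def phiIn (P : Subgroup G) : Subgroup G := P ⊓ sInf {W : Subgroup G | IsMaximalIn W P}

/-- `G` has exactly two conjugacy classes of maximal subgroups. -/
def TwoMaxClasses (G : Type*) [Group G] : Prop :=
  ∃ K L : Subgroup G, IsCoatom K ∧ IsCoatom L ∧ (∀ g : G, conjSub g K ≠ L) ∧
    ∀ T : Subgroup G, IsCoatom T → (∃ g : G, T = conjSub g K) ∨ (∃ g : G, T = conjSub g L)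

/-- The induced subgraph of the non-commuting, non-generating graph on the
actual vertex set `G \ Z(G)`. -/
def ncSubgraph (G : Type*) [Group G] := (ncGraph G).induce {x : G | x ∉ Subgroup.center G}

theorem quotCyclic_iff_isCyclic {H : Subgroup G} [H.Normal] :
    QuotCyclic H ↔ IsCyclic (G ⧸ H) := by
  rw [isCyclic_iff_exists_zpowers_eq_top]
  constructor
  · rintro ⟨g, hg⟩
    refine ⟨g, (eq_top_iff' _).mpr fun q => ?_⟩
    induction q using QuotientGroup.induction_on with | H x =>
    obtain ⟨n, hn⟩ := hg x
    exact mem_zpowers_iff.mpr ⟨n, (QuotientGroup.eq.mpr hn).symm⟩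
  · rintro ⟨q, hq⟩
    obtain ⟨g, rfl⟩ := QuotientGroup.mk_surjective q
    refine ⟨g, fun x => ?_⟩
    obtain ⟨n, hn⟩ := mem_zpowers_iff.mp (hq ▸ mem_top (x : G ⧸ H))
    exact ⟨n, QuotientGroup.eq.mp (by rw [QuotientGroup.mk_zpow, hn])⟩

theorem isCyclic_quotient_of_closure_pair_eq_top {H : Subgroup G} [H.Normal] {a h : G}
    (hh : h ∈ H) (hgen : closure {a, h} = ⊤) : IsCyclic (G ⧸ H) := by
  refine isCyclic_iff_exists_zpowers_eq_top.mpr ⟨a, ?_⟩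
  have := map_top_of_surjective _ (QuotientGroup.mk'_surjective H)
  rwa [← hgen, MonoidHom.map_closure, Set.image_pair, QuotientGroup.mk'_apply,
    QuotientGroup.mk'_apply, (QuotientGroup.eq_one_iff h).mpr hh, Set.pair_comm,
    closure_insert_one, ← zpowers_eq_closure] at this

theorem ncGraph_adj_of_mem {H : Subgroup G} [H.Normal] (hH : ¬ IsCyclic (G ⧸ H)) {a h : G}
    (hh : h ∈ H) (hah : ¬ Commute a h) : (ncGraph G).Adj a h :=
  ⟨hah, fun hgen => hH (isCyclic_quotient_of_closure_pair_eq_top hh hgen)⟩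

theorem exists_mem_not_commute_of_notMem_centralizer {H : Subgroup G} {x y : G}
    (hx : x ∉ centralizer (H : Set G)) (hy : y ∉ centralizer (H : Set G)) :
    ∃ w ∈ H, ¬ Commute x w ∧ ¬ Commute y w := by
  simp only [mem_centralizer_iff, not_forall] at hx hy
  obtain ⟨n, hn, hxn⟩ := hx
  obtain ⟨m, hm, hym⟩ := hy
  by_contra! h
  have hyn : Commute y n := h n hn fun e => hxn e.eq.symm
  have hxm : Commute x m := by_contra fun hxm => hym (h m hm hxm).eq.symm
  have hynm : Commute y (n * m) :=
    h _ (mul_mem hn hm) fun e => hxn (by simpa using (e.mul_right hxm.inv_right).eq.symm)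
  exact hym (by simpa using (hyn.inv_right.mul_right hynm).eq.symm)

theorem exists_ne_commute_of_notMem_center {g : G} (hg : g ∉ center G) :
    ∃ x y : G, x ∉ center G ∧ y ∉ center G ∧ x ≠ y ∧ Commute x y := by
  -- Otherwise `Z(G) = 1` and every `x` equals `x⁻¹`, which forces `G` to be abelian.
  by_contra! h
  have center_trivial : ∀ z ∈ center G, z = 1 := fun z hz => by
    by_contra hz1
    refine h g (g * z) hg (fun hgz => hg ?_) (by simpa using hz1)
      ((Commute.refl g).mul_right (mem_center_iff.mp hz g))
    simpa using mul_mem hgz (inv_mem hz)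
  have inv_eq_self : ∀ x : G, x⁻¹ = x := fun x => by
    by_cases hx : x ∈ center G
    · rw [center_trivial x hx, inv_one]
    · by_contra hne
      exact h x⁻¹ x (by simpa using hx) hx hne (Commute.refl x).inv_left
  refine hg (mem_center_iff.mpr fun y => ?_)
  have := inv_eq_self (y * g)
  rw [mul_inv_rev, inv_eq_self, inv_eq_self] at this
  exact this.symm

theorem edist_le_two_of_adj_of_adj {V : Type*} {Γ : SimpleGraph V} {u v w : V}
    (huv : Γ.Adj u v) (hvw : Γ.Adj v w) : Γ.edist u w ≤ 2 := by
  simpa using Γ.edist_le (.cons huv (.cons hvw .nil))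

theorem reachable_and_dist_le_of_edist_le {V : Type*} {Γ : SimpleGraph V} {u v : V} {k : ℕ}
    (h : Γ.edist u v ≤ k) : Γ.Reachable u v ∧ Γ.dist u v ≤ k := by
  have hr := Γ.reachable_of_edist_ne_top (ne_top_of_le_ne_top (ENat.natCast_ne_top k) h)
  exact ⟨hr, by exact_mod_cast hr.coe_dist_eq_edist ▸ h⟩

section

variable {N : Subgroup G} [N.Normal]

theorem edist_le_two_of_notMem_centralizer (hNq : ¬ IsCyclic (G ⧸ N)) {x y : G}
    (hx : x ∉ centralizer (N : Set G)) (hy : y ∉ centralizer (N : Set G)) :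
    (ncGraph G).edist x y ≤ 2 := by
  obtain ⟨w, hw, hxw, hyw⟩ := exists_mem_not_commute_of_notMem_centralizer hx hy
  exact edist_le_two_of_adj_of_adj (ncGraph_adj_of_mem hNq hw hxw)
    (ncGraph_adj_of_mem hNq hw hyw).symm

theorem edist_le_two_of_mem_centralizer (hNq : ¬ IsCyclic (G ⧸ N))
    (hCq : ¬ IsCyclic (G ⧸ centralizer (N : Set G))) {x y : G}
    (hxC : x ∈ centralizer (N : Set G)) (hx : x ∉ center G) (hy : y ∉ center G)
    (hyCN : y ∈ centralizer (N : Set G) ∨ y ∈ N) :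
    (ncGraph G).edist x y ≤ 2 := by
  have center_eq : center G = centralizer ((⊤ : Subgroup G) : Set G) := by
    rw [coe_top, centralizer_univ]
  rw [center_eq] at hx hy
  obtain ⟨w, -, hxw, hyw⟩ := exists_mem_not_commute_of_notMem_centralizer hx hy
  refine edist_le_two_of_adj_of_adj (ncGraph_adj_of_mem hCq hxC (mt Commute.symm hxw)).symm ?_
  rcases hyCN with hyC | hyN
  · exact ncGraph_adj_of_mem hCq hyC (mt Commute.symm hyw)
  · exact ncGraph_adj_of_mem hNq hyN (mt Commute.symm hyw)

theorem edist_le_two_or_commute_of_mem_centralizer (hNq : ¬ IsCyclic (G ⧸ N))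
    (hCq : ¬ IsCyclic (G ⧸ centralizer (N : Set G))) {x y : G}
    (hxC : x ∈ centralizer (N : Set G)) (hx : x ∉ center G) (hy : y ∉ center G) :
    (ncGraph G).edist x y ≤ 2 ∨ (Commute x y ∧ y ∉ N ∧ y ∉ centralizer (N : Set G)) := by
  by_cases hyCN : y ∈ centralizer (N : Set G) ∨ y ∈ N
  · exact .inl (edist_le_two_of_mem_centralizer hNq hCq hxC hx hy hyCN)
  push Not at hyCN
  by_cases hxy : Commute x y
  · exact .inr ⟨hxy, hyCN.2, hyCN.1⟩
  · have hadj := (ncGraph_adj_of_mem hCq hxC (mt Commute.symm hxy)).symm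
    exact .inl ((SimpleGraph.edist_eq_one_iff_adj.mpr hadj).trans_le (by norm_num))

theorem edist_le_two_or_exceptional (hNq : ¬ IsCyclic (G ⧸ N))
    (hCq : ¬ IsCyclic (G ⧸ centralizer (N : Set G))) {x y : G} (hx : x ∉ center G)
    (hy : y ∉ center G) :
    (ncGraph G).edist x y ≤ 2 ∨ (Commute x y ∧
      ((x ∈ centralizer (N : Set G) ∧ y ∉ N ∧ y ∉ centralizer (N : Set G)) ∨
        (y ∈ centralizer (N : Set G) ∧ x ∉ N ∧ x ∉ centralizer (N : Set G)))) := by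
  by_cases hxC : x ∈ centralizer (N : Set G)
  · exact (edist_le_two_or_commute_of_mem_centralizer hNq hCq hxC hx hy).imp_right
      fun ⟨hxy, hyN, hyC⟩ => ⟨hxy, .inl ⟨hxC, hyN, hyC⟩⟩
  by_cases hyC : y ∈ centralizer (N : Set G)
  · rw [SimpleGraph.edist_comm]
    exact (edist_le_two_or_commute_of_mem_centralizer hNq hCq hyC hy hx).imp_right
      fun ⟨hyx, hxN, _⟩ => ⟨hyx.symm, .inr ⟨hyC, hxN, hxC⟩⟩
  exact .inl (edist_le_two_of_notMem_centralizer hNq hxC hyC)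

theorem edist_le_three_of_mem_centralizer (hNq : ¬ IsCyclic (G ⧸ N))
    (hCq : ¬ IsCyclic (G ⧸ centralizer (N : Set G))) {x y : G}
    (hxC : x ∈ centralizer (N : Set G)) (hx : x ∉ center G) (hy : y ∉ center G) :
    (ncGraph G).edist x y ≤ 3 := by
  by_cases hyC : y ∈ centralizer (N : Set G)
  · exact (edist_le_two_of_mem_centralizer hNq hCq hxC hx hy (.inl hyC)).trans (by norm_num)
  obtain ⟨n, hn, hny⟩ := not_forall₂.mp (mt mem_centralizer_iff.mpr hyC)
  have hnZ : n ∉ center G := fun h => hny (mem_center_iff.mp h y).symm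
  calc (ncGraph G).edist x y ≤ (ncGraph G).edist x n + (ncGraph G).edist n y :=
        SimpleGraph.edist_triangle
    _ ≤ 2 + 1 := add_le_add (edist_le_two_of_mem_centralizer hNq hCq hxC hx hnZ (.inr hn))
        (SimpleGraph.edist_eq_one_iff_adj.mpr
          (ncGraph_adj_of_mem hNq hn (mt Commute.symm hny)).symm).le
    _ = 3 := by norm_num

theorem edist_le_three (hNq : ¬ IsCyclic (G ⧸ N))
    (hCq : ¬ IsCyclic (G ⧸ centralizer (N : Set G))) {x y : G} (hx : x ∉ center G)
    (hy : y ∉ center G) :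
    (ncGraph G).edist x y ≤ 3 := by
  rcases edist_le_two_or_exceptional hNq hCq hx hy with h | ⟨-, ⟨hxC, -⟩ | ⟨hyC, -⟩⟩
  · exact h.trans (by norm_num)
  · exact edist_le_three_of_mem_centralizer hNq hCq hxC hx hy
  · rw [SimpleGraph.edist_comm]
    exact edist_le_three_of_mem_centralizer hNq hCq hyC hy hx

end

/-- Lemma 5.3 / `lem:gcnoncyc`. -/
theorem statement_18 {N : Subgroup G} [hN : N.Normal]
    (hNq : ¬ IsCyclic (G ⧸ N)) (hNZ : ¬ N ≤ Subgroup.center G)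
    (hCq : ¬ QuotCyclic (Subgroup.centralizer (N : Set G))) :
    (∀ x y : G, x ∉ Subgroup.center G → y ∉ Subgroup.center G →
        (ncGraph G).Reachable x y ∧ (ncGraph G).dist x y ≤ 3) ∧
      (∃ x y : G, x ∉ Subgroup.center G ∧ y ∉ Subgroup.center G ∧
        2 ≤ (ncGraph G).dist x y) ∧
      (∀ x y : G, x ∉ Subgroup.center G → y ∉ Subgroup.center G →
        (ncGraph G).dist x y = 3 →
        x * y = y * x ∧
          ((x ∈ Subgroup.centralizer (N : Set G) ∧ y ∉ N ∧
              y ∉ Subgroup.centralizer (N : Set G)) ∨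
            (y ∈ Subgroup.centralizer (N : Set G) ∧ x ∉ N ∧
              x ∉ Subgroup.centralizer (N : Set G)))) ∧
      (Subgroup.centralizer (N : Set G) = Subgroup.center G →
        ∀ x y : G, x ∉ Subgroup.center G → y ∉ Subgroup.center G →
          (ncGraph G).dist x y ≤ 2) := by
  replace hCq : ¬ IsCyclic (G ⧸ centralizer (N : Set G)) := mt quotCyclic_iff_isCyclic.mpr hCq
  have diam_le_three (x y : G) (hx : x ∉ center G) (hy : y ∉ center G) :=
    reachable_and_dist_le_of_edist_le (edist_le_three hNq hCq hx hy)
  refine ⟨diam_le_three, ?_, fun x y hx hy h3 => ?_, fun hCZ x y hx hy => ?_⟩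
  · obtain ⟨g, -, hg⟩ := SetLike.not_le_iff_exists.mp hNZ
    obtain ⟨x, y, hx, hy, hne, hxy⟩ := exists_ne_commute_of_notMem_center hg
    refine ⟨x, y, hx, hy, ?_⟩
    have h0 : (ncGraph G).dist x y ≠ 0 :=
      SimpleGraph.dist_ne_zero_iff_ne_and_reachable.mpr ⟨hne, (diam_le_three x y hx hy).1⟩
    have h1 : (ncGraph G).dist x y ≠ 1 := fun h => (SimpleGraph.dist_eq_one_iff_adj.mp h).1 hxy
    omega
  · refine (edist_le_two_or_exceptional hNq hCq hx hy).resolve_left fun h => ?_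
    have := (reachable_and_dist_le_of_edist_le (k := 2) h).2
    omega
  · rcases edist_le_two_or_exceptional hNq hCq hx hy with h | ⟨-, ⟨hxC, -⟩ | ⟨hyC, -⟩⟩
    · exact (reachable_and_dist_le_of_edist_le h).2
    · exact absurd (hCZ ▸ hxC) hx
    · exact absurd (hCZ ▸ hyC) hy

end NC
end

section
/- Let G be a group containing a normal subgroup N such that G/N is not cyclic and N is not contained in Z(G), set C := C_G(N), and suppose that G/C is cyclic. Then for every subgroup H of G with C properly contained in H, the subgroup H is non-abelian, Z(H) is properly contained in Z(C), and H is normal in G. In particular, Z(G) is properly contained in Z(C). -/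
/-!
Since `G/C` is cyclic and `N ∩ C = Z(N)`, the image of `N` in `G/C` is a cyclic quotient of `N`
by a central subgroup, so `N` is abelian; hence `N ≤ C` and even `N ≤ Z(C)`. If `C < H`, pick
`h ∈ H \ C`; then some `m ∈ N ≤ H` does not commute with `h`, so `H` is non-abelian and
`m ∈ Z(C) \ Z(H)`. Normality of `H` comes from `G/C` being abelian, and the last claim is the
case `H = G`, which is admissible because `N ⊄ Z(G)` forces `C < G`.
-/

open Subgroup

namespace NC

variable {G : Type*} [Group G]

theorem QuotCyclic.isCyclic {K : Subgroup G} [K.Normal] (h : QuotCyclic K) :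
    IsCyclic (G ⧸ K) := by
  obtain ⟨g, hg⟩ := h
  refine ⟨⟨QuotientGroup.mk g, fun x => ?_⟩⟩
  obtain ⟨x, rfl⟩ := QuotientGroup.mk_surjective x
  obtain ⟨n, hn⟩ := hg x
  exact ⟨n, (QuotientGroup.eq.mpr hn).symm⟩

theorem centerOf_top : centerOf (⊤ : Subgroup G) = center G := by
  ext z
  simp [centerOf, mem_center_iff, mem_centralizer_iff, eq_comm]

theorem normal_of_le_of_isMulCommutative_quotient {K H : Subgroup G} [K.Normal]
    [IsMulCommutative (G ⧸ K)] (hKH : K ≤ H) : H.Normal := by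
  rw [← sup_eq_right.mpr hKH, ← QuotientGroup.comap_map_mk']
  infer_instance

section Centralizer

variable {N : Subgroup G}

theorem le_centralizer_of_isCyclic_quotient_centralizer [(centralizer (N : Set G)).Normal]
    [IsCyclic (G ⧸ centralizer (N : Set G))] : N ≤ centralizer (N : Set G) := by
  let f : N →* G ⧸ centralizer (N : Set G) := (QuotientGroup.mk' _).comp N.subtype
  have hker : f.ker ≤ center N := fun n hn => by
    have hnC : (n : G) ∈ centralizer (N : Set G) :=
      (QuotientGroup.eq_one_iff _).mp (MonoidHom.mem_ker.mp hn)
    exact mem_center_iff.mpr fun m => Subtype.ext (mem_centralizer_iff.mp hnC m m.2)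
  have := f.isMulCommutative_of_isCyclic_of_ker_le_center hker
  exact le_centralizer_iff_isMulCommutative.mpr this

theorem le_centerOf_centralizer (hN : N ≤ centralizer (N : Set G)) :
    N ≤ centerOf (centralizer (N : Set G)) :=
  le_inf hN (le_centralizer_iff.mp le_rfl)

theorem exists_mul_ne_mul_of_centralizer_lt {H : Subgroup G}
    (hN : N ≤ centralizer (N : Set G)) (hH : centralizer (N : Set G) < H) :
    ∃ a ∈ H, ∃ b ∈ H, a * b ≠ b * a := by
  by_contra! hcomm
  exact hH.not_ge fun h hh =>
    mem_centralizer_iff.mpr fun m hm => hcomm m (hH.le (hN hm)) h hh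

theorem centerOf_lt_centerOf_centralizer {H : Subgroup G}
    (hN : N ≤ centralizer (N : Set G)) (hH : centralizer (N : Set G) < H) :
    centerOf H < centerOf (centralizer (N : Set G)) := by
  refine lt_of_le_not_ge (fun z hz => ?_) fun hle => ?_
  · have hzc := (mem_inf.mp hz).2
    refine mem_inf.mpr ⟨mem_centralizer_iff.mpr fun m hm => ?_,
      mem_centralizer_iff.mpr fun c hc => mem_centralizer_iff.mp hzc c (hH.le hc)⟩
    exact mem_centralizer_iff.mp hzc m (hH.le (hN hm))
  · obtain ⟨h, hhH, hhC⟩ := SetLike.exists_of_lt hH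
    obtain ⟨m, hm, hmh⟩ := not_forall₂.mp (mt mem_centralizer_iff.mpr hhC)
    have hmH : m ∈ centerOf H := hle (le_centerOf_centralizer hN hm)
    exact hmh (mem_centralizer_iff.mp (mem_inf.mp hmH).2 h hhH).symm

end Centralizer

theorem statement_19_general {N : Subgroup G} [hN : N.Normal]
    (hNZ : ¬ N ≤ Subgroup.center G)
    (hCq : QuotCyclic (Subgroup.centralizer (N : Set G))) :
    (∀ H : Subgroup G, Subgroup.centralizer (N : Set G) < H →
        (∃ a ∈ H, ∃ b ∈ H, a * b ≠ b * a) ∧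
          centerOf H < centerOf (Subgroup.centralizer (N : Set G)) ∧ H.Normal) ∧
      Subgroup.center G < centerOf (Subgroup.centralizer (N : Set G)) := by
  have := hCq.isCyclic
  have hNC : N ≤ centralizer (N : Set G) := le_centralizer_of_isCyclic_quotient_centralizer
  have hAbove : ∀ H : Subgroup G, centralizer (N : Set G) < H →
      (∃ a ∈ H, ∃ b ∈ H, a * b ≠ b * a) ∧
        centerOf H < centerOf (centralizer (N : Set G)) ∧ H.Normal := fun H hH =>
    ⟨exists_mul_ne_mul_of_centralizer_lt hNC hH, centerOf_lt_centerOf_centralizer hNC hH,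
      normal_of_le_of_isMulCommutative_quotient hH.le⟩
  have hCtop : centralizer (N : Set G) < ⊤ :=
    lt_top_iff_ne_top.mpr fun h => hNZ (centralizer_eq_top_iff_subset.mp h)
  exact ⟨hAbove, centerOf_top (G := G) ▸ (hAbove ⊤ hCtop).2.1⟩

/-- Lemma 5.5 / `lem:ninzc`. -/
theorem statement_19 {N : Subgroup G} [hN : N.Normal]
    (hNq : ¬ IsCyclic (G ⧸ N)) (hNZ : ¬ N ≤ Subgroup.center G)
    (hCq : QuotCyclic (Subgroup.centralizer (N : Set G))) :
    (∀ H : Subgroup G, Subgroup.centralizer (N : Set G) < H →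
        (∃ a ∈ H, ∃ b ∈ H, a * b ≠ b * a) ∧
          centerOf H < centerOf (Subgroup.centralizer (N : Set G)) ∧ H.Normal) ∧
      Subgroup.center G < centerOf (Subgroup.centralizer (N : Set G)) :=
  statement_19_general (hN := hN) hNZ hCq

end NC
end
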